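/- The volume of a solid torus in ℝ³ obtained as the tube of radius 1 around a unit circle (i.e., the set of points at distance at most 1 from a circle of radius 1) equals 2π². -/

import Mathlib

/-!
The distance from `(x, y, z)` to the unit circle is `√((√(x² + y²) - 1)² + z²)`, attained at
`(x, y, 0) / √(x² + y²)`, so the solid torus is `(√(x² + y²) - 1)² + z² ≤ 1`. Its slice at
height `z` is the planar annulus with radii `1 ± √(1 - z²)`, of area `4π √(1 - z²)`, so by
Cavalieri's principle the volume is `4π ∫₋₁¹ √(1 - z²) dz = 4π · π/2 = 2π²`.
-/

open MeasureTheory Real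

/-- The unit circle in the `z = 0` plane of `ℝ³`. -/
def unitCircle3 : Set (EuclideanSpace ℝ (Fin 3)) :=
  {p | (p 0) ^ 2 + (p 1) ^ 2 = 1 ∧ p 2 = 0}

theorem EuclideanSpace.volume_eq_lintegral_volume_insertNth {n : ℕ} (i : Fin (n + 1))
    {s : Set (EuclideanSpace ℝ (Fin (n + 1)))} (hs : MeasurableSet s) :
    volume s = ∫⁻ z, volume {v : EuclideanSpace ℝ (Fin n) |
      WithLp.toLp 2 (Fin.insertNth i z v.ofLp) ∈ s} := by
  have hf :=
    (PiLp.volume_preserving_toLp _).comp <|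
      (volume_preserving_piFinSuccAbove (fun _ ↦ ℝ) i).symm.comp <|
        (MeasurePreserving.id volume).prod (PiLp.volume_preserving_ofLp _)
  rw [← hf.measure_preimage hs.nullMeasurableSet, Measure.prod_apply (hs.preimage hf.measurable)]
  rfl

theorem EuclideanSpace.dist_eq_fin_three (p q : EuclideanSpace ℝ (Fin 3)) :
    dist p q = √((p 0 - q 0) ^ 2 + (p 1 - q 1) ^ 2 + (p 2 - q 2) ^ 2) := by
  simp only [EuclideanSpace.dist_eq, Fin.sum_univ_three, Real.dist_eq, sq_abs]

theorem sqrt_sq_add_sq_sub_one_sq_le {x y a b : ℝ} (hab : a ^ 2 + b ^ 2 = 1) :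
    (√(x ^ 2 + y ^ 2) - 1) ^ 2 ≤ (x - a) ^ 2 + (y - b) ^ 2 := by
  have hs := Real.sq_sqrt (add_nonneg (sq_nonneg x) (sq_nonneg y))
  have cauchy_schwarz : a * x + b * y ≤ √(x ^ 2 + y ^ 2) :=
    Real.le_sqrt_of_sq_le (by nlinarith [sq_nonneg (a * y - b * x)])
  nlinarith

theorem exists_sq_add_sq_eq_one_sub_sq_add_sub_sq_eq (x y : ℝ) :
    ∃ a b : ℝ, a ^ 2 + b ^ 2 = 1 ∧
      (x - a) ^ 2 + (y - b) ^ 2 = (√(x ^ 2 + y ^ 2) - 1) ^ 2 := by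
  -- at the origin every point of the circle is nearest
  have hs := Real.sq_sqrt (add_nonneg (sq_nonneg x) (sq_nonneg y))
  rcases (Real.sqrt_nonneg (x ^ 2 + y ^ 2)).eq_or_lt with hs0 | hs0
  · have hx : x = 0 := by nlinarith [sq_nonneg y]
    have hy : y = 0 := by nlinarith [sq_nonneg x]
    refine ⟨1, 0, by norm_num, ?_⟩
    simp [hx, hy]
  · refine ⟨x / √(x ^ 2 + y ^ 2), y / √(x ^ 2 + y ^ 2), ?_, ?_⟩
    · field_simp
      exact hs.symm
    · field_simp
      rw [hs]

theorem infDist_unitCircle3 (p : EuclideanSpace ℝ (Fin 3)) :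
    Metric.infDist p unitCircle3 = √((√(p 0 ^ 2 + p 1 ^ 2) - 1) ^ 2 + p 2 ^ 2) := by
  obtain ⟨a, b, hab, hdist⟩ := exists_sq_add_sq_eq_one_sub_sq_add_sub_sq_eq (p 0) (p 1)
  have hmem : !₂[a, b, 0] ∈ unitCircle3 := ⟨hab, rfl⟩
  refine le_antisymm ?_ ((Metric.le_infDist ⟨_, hmem⟩).2 fun q ⟨hq, hq2⟩ ↦ ?_)
  · refine (Metric.infDist_le_dist_of_mem hmem).trans_eq ?_
    rw [EuclideanSpace.dist_eq_fin_three]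
    simp [hdist]
  · rw [EuclideanSpace.dist_eq_fin_three, hq2, sub_zero]
    gcongr
    exact sqrt_sq_add_sq_sub_one_sq_le hq

theorem EuclideanSpace.volume_closedBall_diff_ball_fin_two (x : EuclideanSpace ℝ (Fin 2))
    {r R : ℝ} (hr : 0 ≤ r) (hrR : r ≤ R) :
    volume (Metric.closedBall x R \ Metric.ball x r) = ENNReal.ofReal (π * (R ^ 2 - r ^ 2)) := by
  rw [measure_sdiff (Metric.ball_subset_closedBall.trans (Metric.closedBall_subset_closedBall hrR))
    measurableSet_ball.nullMeasurableSet measure_ball_lt_top.ne, volume_ball_fin_two,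
    volume_closedBall_fin_two, ← ENNReal.ofReal_pow hr, ← ENNReal.ofReal_pow (hr.trans hrR),
    ← ENNReal.ofReal_mul (by positivity), ← ENNReal.ofReal_mul (by positivity),
    ← ENNReal.ofReal_sub _ (by positivity)]
  congr 1
  ring

theorem volume_setOf_norm_sub_one_sq_add_sq_le_one (z : ℝ) :
    volume {v : EuclideanSpace ℝ (Fin 2) | (‖v‖ - 1) ^ 2 + z ^ 2 ≤ 1}
      = ENNReal.ofReal (4 * π * √(1 - z ^ 2)) := by
  rcases le_or_gt (z ^ 2) 1 with hz | hz
  · set w := √(1 - z ^ 2)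
    have hw : w ^ 2 = 1 - z ^ 2 := Real.sq_sqrt (by linarith)
    have hw1 : w ≤ 1 := Real.sqrt_le_one.2 (by nlinarith)
    have hw0 : 0 ≤ w := Real.sqrt_nonneg _
    have annulus : {v : EuclideanSpace ℝ (Fin 2) | (‖v‖ - 1) ^ 2 + z ^ 2 ≤ 1}
        = Metric.closedBall 0 (1 + w) \ Metric.ball 0 (1 - w) := by
      ext v
      calc (‖v‖ - 1) ^ 2 + z ^ 2 ≤ 1 ↔ (‖v‖ - 1) ^ 2 ≤ w ^ 2 := by
            rw [hw, le_sub_iff_add_le]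
        _ ↔ |‖v‖ - 1| ≤ w := by rw [sq_le_sq, abs_of_nonneg hw0]
        _ ↔ _ := by
          rw [abs_sub_le_iff, Set.mem_sdiff, Metric.mem_closedBall, Metric.mem_ball,
            dist_zero_right, not_lt]
          constructor <;> rintro ⟨h₁, h₂⟩ <;> constructor <;> linarith
    rw [annulus, EuclideanSpace.volume_closedBall_diff_ball_fin_two _ (by linarith) (by linarith)]
    congr 1
    ring
  · have empty : {v : EuclideanSpace ℝ (Fin 2) | (‖v‖ - 1) ^ 2 + z ^ 2 ≤ 1} = ∅ :=
      Set.eq_empty_of_forall_notMem fun v hv ↦ by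
        nlinarith [sq_nonneg (‖v‖ - 1), hv.out]
    rw [empty, measure_empty, Real.sqrt_eq_zero'.2 (by linarith), mul_zero, ENNReal.ofReal_zero]

theorem lintegral_ofReal_sqrt_one_sub_sq :
    ∫⁻ z, ENNReal.ofReal √(1 - z ^ 2) = ENNReal.ofReal (π / 2) := by
  have hsupp : (fun z : ℝ ↦ ENNReal.ofReal √(1 - z ^ 2)).support ⊆ Set.Icc (-1) 1 := by
    intro z hz
    rw [Function.mem_support, ne_eq, ENNReal.ofReal_eq_zero, not_le, Real.sqrt_pos] at hz
    constructor <;> nlinarith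
  rw [← setLIntegral_eq_of_support_subset hsupp, ← ofReal_integral_eq_lintegral_ofReal
    ((by fun_prop : Continuous fun z : ℝ ↦ √(1 - z ^ 2)).integrableOn_Icc)
    (.of_forall fun _ ↦ by positivity),
    integral_Icc_eq_integral_Ioc, ← intervalIntegral.integral_of_le (by norm_num),
    integral_sqrt_one_sub_sq]

/-- The volume of the solid torus ("bialy") of tube radius 1 around a unit circle
in `ℝ³` equals `2π²`. -/
theorem volume_bialy :
    volume {p : EuclideanSpace ℝ (Fin 3) | Metric.infDist p unitCircle3 ≤ 1}
      = ENNReal.ofReal (2 * π ^ 2) := by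
  calc volume {p : EuclideanSpace ℝ (Fin 3) | Metric.infDist p unitCircle3 ≤ 1}
      = volume {p : EuclideanSpace ℝ (Fin 3) |
          (√(p 0 ^ 2 + p 1 ^ 2) - 1) ^ 2 + p 2 ^ 2 ≤ 1} := by
        congr 1
        ext p
        simp [infDist_unitCircle3]
    _ = ∫⁻ z, volume {v : EuclideanSpace ℝ (Fin 2) | (‖v‖ - 1) ^ 2 + z ^ 2 ≤ 1} := by
        rw [EuclideanSpace.volume_eq_lintegral_volume_insertNth 2
          (measurableSet_le (by fun_prop) measurable_const)]
        refine lintegral_congr fun z ↦ congrArg volume (Set.ext fun v ↦ ?_)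
        change (√(v 0 ^ 2 + v 1 ^ 2) - 1) ^ 2 + z ^ 2 ≤ 1 ↔ (‖v‖ - 1) ^ 2 + z ^ 2 ≤ 1
        simp [EuclideanSpace.norm_eq, Fin.sum_univ_two]
    _ = ∫⁻ z, ENNReal.ofReal (4 * π) * ENNReal.ofReal √(1 - z ^ 2) := by
        simp_rw [volume_setOf_norm_sub_one_sq_add_sq_le_one,
          ENNReal.ofReal_mul (by positivity : 0 ≤ 4 * π)]
    _ = ENNReal.ofReal (2 * π ^ 2) := by
        rw [lintegral_const_mul' _ _ ENNReal.ofReal_ne_top, lintegral_ofReal_sqrt_one_sub_sq,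
          ← ENNReal.ofReal_mul (by positivity)]
        ring_nf
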